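/- arXiv:2001.01933 — 3 statements merged into one kernel-verified Lean document; each statement's English description precedes it below -/
import Mathlib

section
/- Fix a real constant 0 < c < 1 and an integer k ≥ 2, and set C = α(c)·k!/(1−c)^k. There exists a constant q = q(c,k) > 0 such that the following holds: for n ranging over values with cn ∈ ℕ, let t = cn, t' = t − k, and p_n = n^{−(k−1)}·(C + q·(1−c)^{−k}·k!·(log n)/n). If Δ ∼ RP(n,t,p_n), then the probability that Δ has a complete t'-skeleton tends to 1 as n → ∞. -/
/-!
A (t-k)-set `y` is missed by `Δ` when none of the `C(n-t+k, k) ≥ ((1-c)n)^k/k!` facets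
containing it is drawn, which happens with probability at most `exp (-p ((1-c)n)^k/k!)`; the
choice of `p` makes this `exp (-(n α(c) + q log n))`. There are
`C(n, t-k) ≤ (c/(1-c))^k C(n, t) ≤ (c/(1-c))^k exp (n α(c))` such sets, so by the union bound the
skeleton is incomplete with probability at most `(c/(1-c))^k n^(-q)`; `q = 1` already suffices.
-/

open scoped Classical

noncomputable section

/-- The natural-log entropy function `α(c)`. -/
def entropy (c : ℝ) : ℝ := -c * Real.log c - (1 - c) * Real.log (1 - c)

/-- The simplicial complex generated by a family `F` of facets: all nonempty
subsets of members of `F`. -/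
def genComplex {n : ℕ} (F : Finset (Finset (Fin n))) : Finset (Finset (Fin n)) :=
  Finset.univ.filter (fun x => x.Nonempty ∧ ∃ f ∈ F, x ⊆ f)

/-- The probability, under the random pure model `RP(n,t,p)` (each `t`-subset of
`[n]` is taken as a facet independently with probability `p`), of the event `P`
for the generated complex. -/
def rpProb (n t : ℕ) (p : ℝ) (P : Finset (Finset (Fin n)) → Prop) : ℝ :=
  ∑ F ∈ (Finset.univ.filter (fun s : Finset (Fin n) => s.card = t)).powerset,
    (if P (genComplex F) then p ^ F.card * (1 - p) ^ (Nat.choose n t - F.card) else 0)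

open Finset Real Filter

section BernoulliSubset

variable {β : Type*} (S : Finset β) (p : ℝ)

def bernoulliWeight (F : Finset β) : ℝ := p ^ F.card * (1 - p) ^ (S.card - F.card)

theorem sum_bernoulliWeight : ∑ F ∈ S.powerset, bernoulliWeight S p F = 1 := by
  simp [bernoulliWeight, sum_pow_mul_eq_add_pow]

variable {p}

theorem bernoulliWeight_nonneg (hp0 : 0 ≤ p) (hp1 : p ≤ 1) (F : Finset β) :
    0 ≤ bernoulliWeight S p F :=
  mul_nonneg (pow_nonneg hp0 _) (pow_nonneg (sub_nonneg.2 hp1) _)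

theorem sum_bernoulliWeight_disjoint {T : Finset β} (hT : T ⊆ S) :
    ∑ F ∈ S.powerset with Disjoint F T, bernoulliWeight S p F = (1 - p) ^ T.card := by
  have hfilter : {F ∈ S.powerset | Disjoint F T} = (S \ T).powerset := by
    ext F
    simp [subset_sdiff]
  have hweight : ∀ F ∈ (S \ T).powerset,
      bernoulliWeight S p F = (1 - p) ^ T.card * bernoulliWeight (S \ T) p F := by
    intro F hF
    have hFT := card_le_card (mem_powerset.1 hF)
    have hTS := card_le_card hT
    rw [card_sdiff_of_subset hT] at hFT
    rw [bernoulliWeight, bernoulliWeight, card_sdiff_of_subset hT, mul_left_comm, ← pow_add]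
    congr 2
    omega
  rw [hfilter, sum_congr rfl hweight, ← mul_sum, sum_bernoulliWeight, mul_one]

theorem one_sub_sum_le_sum_bernoulliWeight {ι : Type*} (hp0 : 0 ≤ p) (hp1 : p ≤ 1)
    (P : Finset β → Prop) (Y : Finset ι) (T : ι → Finset β) (hT : ∀ y ∈ Y, T y ⊆ S)
    (hcover : ∀ F ⊆ S, ¬ P F → ∃ y ∈ Y, Disjoint F (T y)) :
    1 - ∑ y ∈ Y, (1 - p) ^ (T y).card ≤ ∑ F ∈ S.powerset with P F, bernoulliWeight S p F := by
  have hw := bernoulliWeight_nonneg S hp0 hp1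
  have hfail : ∑ F ∈ S.powerset with ¬ P F, bernoulliWeight S p F
      ≤ ∑ y ∈ Y, (1 - p) ^ (T y).card := by
    calc ∑ F ∈ S.powerset with ¬ P F, bernoulliWeight S p F
        ≤ ∑ F ∈ S.powerset with ¬ P F, ∑ y ∈ Y with Disjoint F (T y), bernoulliWeight S p F := by
          refine sum_le_sum fun F hF => ?_
          obtain ⟨hFS, hPF⟩ := mem_filter.1 hF
          obtain ⟨y, hy, hdisj⟩ := hcover F (mem_powerset.1 hFS) hPF
          exact single_le_sum (fun _ _ => hw F) (mem_filter.2 ⟨hy, hdisj⟩)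
      _ ≤ ∑ F ∈ S.powerset, ∑ y ∈ Y with Disjoint F (T y), bernoulliWeight S p F :=
          sum_le_sum_of_subset_of_nonneg (filter_subset _ _)
            fun F _ _ => sum_nonneg fun _ _ => hw F
      _ = ∑ y ∈ Y, ∑ F ∈ S.powerset with Disjoint F (T y), bernoulliWeight S p F := by
          simp only [sum_filter]
          exact sum_comm
      _ = ∑ y ∈ Y, (1 - p) ^ (T y).card :=
          sum_congr rfl fun y hy => sum_bernoulliWeight_disjoint S (hT y hy)
  have htotal := sum_filter_add_sum_filter_not S.powerset P (bernoulliWeight S p)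
  rw [sum_bernoulliWeight] at htotal
  linarith

end BernoulliSubset

section Skeleton

variable {n : ℕ}

theorem rpProb_eq_sum_bernoulliWeight (t : ℕ) (p : ℝ) (P : Finset (Finset (Fin n)) → Prop) :
    rpProb n t p P = ∑ F ∈ (powersetCard t univ).powerset with P (genComplex F),
      bernoulliWeight (powersetCard t (univ : Finset (Fin n))) p F := by
  rw [rpProb, sum_filter, powersetCard_eq_filter, powerset_univ]
  congr! 3
  rw [bernoulliWeight, ← powerset_univ, ← powersetCard_eq_filter, card_powersetCard, card_univ,
    Fintype.card_fin]

theorem exists_disjoint_superset_of_notMem_genComplex {F : Finset (Finset (Fin n))}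
    {x : Finset (Fin n)} (hx : x.Nonempty) (hxΔ : x ∉ genComplex F) {m : ℕ} (hxm : x.card ≤ m)
    (hmn : m ≤ n) (𝒯 : Finset (Finset (Fin n))) :
    ∃ y ∈ powersetCard m univ, Disjoint F {s ∈ 𝒯 | y ⊆ s} := by
  obtain ⟨y, hxy, -, hy⟩ := exists_subsuperset_card_eq (subset_univ x) hxm (by simpa using hmn)
  refine ⟨y, mem_powersetCard_univ.2 hy, disjoint_left.2 fun f hfF hf => hxΔ ?_⟩
  simpa [genComplex, hx] using ⟨f, hfF, hxy.trans (mem_filter.1 hf).2⟩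

theorem choose_le_card_filter_superset {m : ℕ} (k : ℕ) {y : Finset (Fin n)} (hy : y.card = m) :
    (n - m).choose k ≤ #{s ∈ powersetCard (m + k) (univ : Finset (Fin n)) | y ⊆ s} := by
  have hdisj : ∀ z ∈ powersetCard k (univ \ y), Disjoint y z := fun z hz =>
    disjoint_right.2 fun a ha => (mem_sdiff.1 ((mem_powersetCard.1 hz).1 ha)).2
  calc (n - m).choose k = #(powersetCard k (univ \ y)) := by
        rw [card_powersetCard, card_univ_sdiff, Fintype.card_fin, hy]
    _ ≤ _ := by
        refine card_le_card_of_injOn (y ∪ ·) (fun z hz => ?_) fun z₁ hz₁ z₂ hz₂ h => ?_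
        · have hzk := (mem_powersetCard.1 hz).2
          simp [card_union_of_disjoint (hdisj z hz), hy, hzk]
        · rw [← union_sdiff_cancel_left (hdisj z₁ hz₁), ← union_sdiff_cancel_left (hdisj z₂ hz₂)]
          exact congrArg (· \ y) h

/-- The union bound over the `(t - k)`-sets that no facet contains. -/
theorem one_sub_choose_mul_le_rpProb {t k : ℕ} {p : ℝ} (hp0 : 0 ≤ p) (hp1 : p ≤ 1)
    (hkt : k ≤ t) (htn : t ≤ n) :
    1 - n.choose (t - k) * (1 - p) ^ ((n - (t - k)).choose k) ≤
      rpProb n t p (fun Δ => ∀ x : Finset (Fin n), x.Nonempty → x.card ≤ t - k → x ∈ Δ) := by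
  set 𝒮 := powersetCard t (univ : Finset (Fin n))
  set T : Finset (Fin n) → Finset (Finset (Fin n)) := fun y => {s ∈ 𝒮 | y ⊆ s}
  have hbound : ∑ y ∈ powersetCard (t - k) univ, (1 - p) ^ (T y).card
      ≤ n.choose (t - k) * (1 - p) ^ ((n - (t - k)).choose k) := by
    calc ∑ y ∈ powersetCard (t - k) univ, (1 - p) ^ (T y).card
        ≤ ∑ _y ∈ powersetCard (t - k) (univ : Finset (Fin n)),
            (1 - p) ^ ((n - (t - k)).choose k) := by
          refine sum_le_sum fun y hy => pow_le_pow_of_le_one (by linarith) (by linarith) ?_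
          have := choose_le_card_filter_superset k (mem_powersetCard_univ.1 hy)
          rwa [Nat.sub_add_cancel hkt] at this
      _ = _ := by simp
  rw [rpProb_eq_sum_bernoulliWeight]
  refine le_trans (by linarith) (one_sub_sum_le_sum_bernoulliWeight 𝒮 hp0 hp1 _ _ T
    (fun y _ => filter_subset _ _) fun F _ hF => ?_)
  push Not at hF
  obtain ⟨x, hx, hxk, hxΔ⟩ := hF
  exact exists_disjoint_superset_of_notMem_genComplex hx hxΔ hxk (by omega) 𝒮

end Skeleton

section Estimates

variable {c : ℝ}

theorem entropy_eq_binEntropy (c : ℝ) : entropy c = binEntropy c := by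
  simp only [entropy, binEntropy, log_inv]
  ring

theorem choose_le_exp_mul_entropy (hc0 : 0 < c) (hc1 : c < 1) {n t : ℕ} (ht : (t : ℝ) = c * n)
    (htn : t ≤ n) : (n.choose t : ℝ) ≤ exp (n * entropy c) := by
  have h1c : 0 < 1 - c := sub_pos.2 hc1
  have hterm : c ^ t * (1 - c) ^ (n - t) = exp (-(n * entropy c)) := by
    have hnt : ((n - t : ℕ) : ℝ) = (1 - c) * n := by push_cast [htn]; linarith
    rw [← exp_log (pow_pos hc0 t), ← exp_log (pow_pos h1c (n - t)), ← exp_add, log_pow, log_pow,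
      hnt, ht, entropy]
    ring_nf
  have hle : c ^ t * (1 - c) ^ (n - t) * n.choose t ≤ 1 := by
    calc c ^ t * (1 - c) ^ (n - t) * n.choose t
        ≤ ∑ i ∈ range (n + 1), c ^ i * (1 - c) ^ (n - i) * n.choose i :=
          single_le_sum (f := fun i => c ^ i * (1 - c) ^ (n - i) * (n.choose i : ℝ))
            (fun i _ => by positivity) (mem_range.2 (Nat.lt_succ_of_le htn))
      _ = 1 := by rw [← add_pow]; simp
  rwa [hterm, exp_neg, inv_mul_le_iff₀ (exp_pos _), mul_one] at hle

theorem choose_sub_mul_pow_le {n t k : ℕ} (hkt : k ≤ t) :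
    n.choose (t - k) * (n - t) ^ k ≤ n.choose t * t ^ k := by
  induction k with
  | zero => simp
  | succ k ih =>
    have hstep : n.choose (t - (k + 1)) * (n - t) ≤ n.choose (t - k) * t := by
      have h := Nat.choose_succ_right_eq n (t - (k + 1))
      rw [show t - (k + 1) + 1 = t - k by omega] at h
      calc n.choose (t - (k + 1)) * (n - t)
          ≤ n.choose (t - (k + 1)) * (n - (t - (k + 1))) := Nat.mul_le_mul_left _ (by omega)
        _ = n.choose (t - k) * (t - k) := h.symm
        _ ≤ n.choose (t - k) * t := Nat.mul_le_mul_left _ (by omega)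
    calc n.choose (t - (k + 1)) * (n - t) ^ (k + 1)
        = n.choose (t - (k + 1)) * (n - t) * (n - t) ^ k := by ring
      _ ≤ n.choose (t - k) * t * (n - t) ^ k := Nat.mul_le_mul_right _ hstep
      _ = t * (n.choose (t - k) * (n - t) ^ k) := by ring
      _ ≤ t * (n.choose t * t ^ k) := Nat.mul_le_mul_left _ (ih (by omega))
      _ = n.choose t * t ^ (k + 1) := by ring

theorem choose_sub_le_pow_mul_choose (hc1 : c < 1) {n t k : ℕ} (hn : 0 < n)
    (ht : (t : ℝ) = c * n) (htn : t ≤ n) (hkt : k ≤ t) :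
    (n.choose (t - k) : ℝ) ≤ (c / (1 - c)) ^ k * n.choose t := by
  have hnt : ((n - t : ℕ) : ℝ) = (1 - c) * n := by push_cast [htn]; linarith
  have hpos : 0 < ((1 - c) * n) ^ k := pow_pos (mul_pos (sub_pos.2 hc1) (by positivity)) k
  have hnat : (n.choose (t - k) : ℝ) * ((1 - c) * n) ^ k ≤ n.choose t * (c * n) ^ k := by
    rw [← hnt, ← ht]
    exact_mod_cast choose_sub_mul_pow_le hkt
  calc (n.choose (t - k) : ℝ) = n.choose (t - k) * ((1 - c) * n) ^ k / ((1 - c) * n) ^ k :=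
        (mul_div_cancel_right₀ _ hpos.ne').symm
    _ ≤ n.choose t * (c * n) ^ k / ((1 - c) * n) ^ k := by gcongr
    _ = (c / (1 - c)) ^ k * n.choose t := by
        have : (n : ℝ) ≠ 0 := by positivity
        have : 1 - c ≠ 0 := (sub_pos.2 hc1).ne'
        rw [mul_pow, mul_pow, div_pow]
        field_simp

theorem one_sub_pow_le_exp_neg_mul {p : ℝ} (hp1 : p ≤ 1) (m : ℕ) :
    (1 - p) ^ m ≤ exp (-(p * m)) := by
  calc (1 - p) ^ m ≤ exp (-p) ^ m := pow_le_pow_left₀ (sub_nonneg.2 hp1) (one_sub_le_exp_neg p) m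
    _ = exp (-(p * m)) := by rw [← exp_nat_mul]; ring_nf

theorem choose_mul_one_sub_pow_le (hc0 : 0 < c) (hc1 : c < 1) {n t k : ℕ} (hn : 0 < n)
    (ht : (t : ℝ) = c * n) (htn : t ≤ n) (hkt : k ≤ t) {p : ℝ} (hp0 : 0 ≤ p) (hp1 : p ≤ 1)
    (hp : n * entropy c + log n ≤ p * (((1 - c) * n) ^ k / k.factorial)) :
    n.choose (t - k) * (1 - p) ^ ((n - (t - k)).choose k) ≤ (c / (1 - c)) ^ k / n := by
  have hcount : ((1 - c) * n) ^ k / k.factorial ≤ ((n - (t - k)).choose k : ℝ) := by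
    have hnt : ((1 - c) * n : ℝ) ≤ (n - (t - k) + 1 - k : ℕ) := by
      rw [show n - (t - k) + 1 - k = (n - t) + 1 by omega]
      push_cast [htn]
      linarith
    refine le_trans ?_ (Nat.pow_le_choose k (n - (t - k)))
    gcongr
  have hmiss : (1 - p) ^ ((n - (t - k)).choose k) ≤ exp (-(n * entropy c + log n)) :=
    (one_sub_pow_le_exp_neg_mul hp1 _).trans <|
      exp_le_exp.2 (neg_le_neg (hp.trans (mul_le_mul_of_nonneg_left hcount hp0)))
  have hsets : (n.choose (t - k) : ℝ) ≤ (c / (1 - c)) ^ k * exp (n * entropy c) :=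
    (choose_sub_le_pow_mul_choose hc1 hn ht htn hkt).trans <| by
      gcongr
      exact choose_le_exp_mul_entropy hc0 hc1 ht htn
  calc n.choose (t - k) * (1 - p) ^ ((n - (t - k)).choose k)
      ≤ (c / (1 - c)) ^ k * exp (n * entropy c) * exp (-(n * entropy c + log n)) :=
        mul_le_mul hsets hmiss (pow_nonneg (sub_nonneg.2 hp1) _) (by positivity)
    _ = (c / (1 - c)) ^ k / n := by
        rw [mul_assoc, ← exp_add, show n * entropy c + -(n * entropy c + log n) = -log n by ring,
          exp_neg, exp_log (by positivity), div_eq_mul_inv (_ ^ k)]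

end Estimates

section Threshold

/-- The facet probability `p_n` of the theorem. -/
def rpThreshold (c : ℝ) (k : ℕ) (q : ℝ) (n : ℕ) : ℝ :=
  (1 / (n : ℝ) ^ (k - 1)) *
    (entropy c * k.factorial / (1 - c) ^ k + q * (k.factorial : ℝ) / (1 - c) ^ k * log n / n)

variable {c q : ℝ} {k : ℕ}

theorem rpThreshold_mul_eq (hc1 : c ≠ 1) (hk : 1 ≤ k) {n : ℕ} (hn : n ≠ 0) :
    rpThreshold c k q n * (((1 - c) * n) ^ k / k.factorial) = n * entropy c + q * log n := by
  have hnk : (n : ℝ) ^ k = n ^ (k - 1) * n := by rw [← pow_succ, Nat.sub_add_cancel hk]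
  have : 1 - c ≠ 0 := sub_ne_zero.2 hc1.symm
  rw [rpThreshold, mul_pow, hnk]
  field_simp

theorem rpThreshold_nonneg (hc0 : 0 ≤ c) (hc1 : c ≤ 1) (hq : 0 ≤ q) (n : ℕ) :
    0 ≤ rpThreshold c k q n := by
  have hent : 0 ≤ entropy c := entropy_eq_binEntropy c ▸ binEntropy_nonneg hc0 hc1
  have : 0 ≤ 1 - c := sub_nonneg.2 hc1
  have := log_natCast_nonneg n
  unfold rpThreshold
  positivity

theorem eventually_rpThreshold_le_one (hc0 : 0 ≤ c) (hc1 : c ≤ 1) (hq : 0 ≤ q) (hk : 2 ≤ k) :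
    ∀ᶠ n : ℕ in atTop, rpThreshold c k q n ≤ 1 := by
  set A := entropy c * k.factorial / (1 - c) ^ k
  set B := q * k.factorial / (1 - c) ^ k
  have hA : 0 ≤ A := by
    have := entropy_eq_binEntropy c ▸ binEntropy_nonneg hc0 hc1
    have : 0 ≤ 1 - c := sub_nonneg.2 hc1
    positivity
  have hB : 0 ≤ B := by
    have : 0 ≤ 1 - c := sub_nonneg.2 hc1
    positivity
  filter_upwards [eventually_ge_atTop 1,
    (tendsto_const_div_atTop_nhds_zero_nat (A + B)).eventually (ge_mem_nhds one_pos)] with n hn hAB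
  have hn' : (1 : ℝ) ≤ n := by exact_mod_cast hn
  have hlog : log n / n ≤ 1 :=
    div_le_one_of_le₀ ((log_le_sub_one_of_pos (by positivity)).trans (by linarith)) (by positivity)
  have hpow : (n : ℝ) ≤ n ^ (k - 1) := le_self_pow₀ hn' (by omega)
  calc rpThreshold c k q n = (1 / (n : ℝ) ^ (k - 1)) * (A + B * (log n / n)) := by
        rw [rpThreshold]; ring
    _ ≤ (1 / n) * (A + B) := by gcongr; exact mul_le_of_le_one_right hB hlog
    _ = (A + B) / n := by ring
    _ ≤ 1 := hAB

end Threshold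

/-- For constants `0 < c < 1`, `k ≥ 2`, with `C = α(c)·k!/(1-c)^k`, there is a
constant `q > 0` so that for `t = cn`, `t' = t - k` and
`p = n^{-(k-1)}(C + q(1-c)^{-k} k! log n / n)`, the complex `Δ ~ RP(n,t,p)` has
a complete `t'`-skeleton with high probability. -/
theorem stmt1 (c : ℝ) (hc0 : 0 < c) (hc1 : c < 1) (k : ℕ) (hk : 2 ≤ k) :
    ∃ q : ℝ, 0 < q ∧
      ∀ ε : ℝ, 0 < ε → ∃ N : ℕ, ∀ n : ℕ, N ≤ n → ∀ t : ℕ, (t : ℝ) = c * n →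
        1 - ε ≤ rpProb n t
          ((1 / (n : ℝ) ^ (k - 1)) *
            (entropy c * k.factorial / (1 - c) ^ k +
              q * (k.factorial : ℝ) / (1 - c) ^ k * Real.log n / n))
          (fun Δ => ∀ x : Finset (Fin n), x.Nonempty → x.card ≤ t - k → x ∈ Δ) := by
  refine ⟨1, one_pos, fun ε hε => ?_⟩
  have hlarge : ∀ᶠ n : ℕ in atTop,
      ((k : ℝ) ≤ c * n ∧ (c / (1 - c)) ^ k / n ≤ ε ∧ rpThreshold c k 1 n ≤ 1) ∧ 0 < n :=
    (((tendsto_natCast_atTop_atTop.const_mul_atTop hc0).eventually_ge_atTop _).and <|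
      ((tendsto_const_div_atTop_nhds_zero_nat _).eventually (ge_mem_nhds hε)).and <|
        eventually_rpThreshold_le_one hc0.le hc1.le zero_le_one hk).and (eventually_gt_atTop 0)
  obtain ⟨N, hN⟩ := hlarge.exists_forall_of_atTop
  refine ⟨N, fun n hnN t ht => ?_⟩
  obtain ⟨⟨hkn, hε_n, hp1⟩, hn⟩ := hN n hnN
  have htn : t ≤ n := by exact_mod_cast ht.trans_le (mul_le_of_le_one_left n.cast_nonneg hc1.le)
  have hkt : k ≤ t := by exact_mod_cast hkn.trans ht.ge
  have hp0 := rpThreshold_nonneg (k := k) hc0.le hc1.le zero_le_one n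
  have hp : n * entropy c + log n ≤ rpThreshold c k 1 n * (((1 - c) * n) ^ k / k.factorial) := by
    rw [rpThreshold_mul_eq hc1.ne (by omega) hn.ne', one_mul]
  calc 1 - ε ≤ 1 - n.choose (t - k) * (1 - rpThreshold c k 1 n) ^ ((n - (t - k)).choose k) := by
        linarith [choose_mul_one_sub_pow_le hc0 hc1 hn ht htn hkt hp0 hp1 hp]
    _ ≤ _ := one_sub_choose_mul_le_rpProb hp0 hp1 hkt htn
end
end

section
/- Let k : ℕ → ℤ be any function. For Δ drawn from U(n), the probability that χ(Δ) = k(n) tends to 0 as n → ∞; i.e., with high probability χ(Δ) ≠ k(n). -/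
open scoped Classical

noncomputable section

/-- `Δ` is a simplicial complex on vertex set `Fin n`: all faces are nonempty
and it is downward closed. -/
def IsComplex {n : ℕ} (Δ : Finset (Finset (Fin n))) : Prop :=
  (∀ x ∈ Δ, x.Nonempty) ∧
    ∀ x ∈ Δ, ∀ y : Finset (Fin n), y.Nonempty → y ⊆ x → y ∈ Δ

/-- The finite set of all simplicial complexes on `n` vertices. -/
def allComplexes (n : ℕ) : Finset (Finset (Finset (Fin n))) :=
  Finset.univ.filter IsComplex

/-- The probability, under the uniform measure `U(n)` on all simplicial
complexes on `n` vertices, of the event `P`. -/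
def uniformProb (n : ℕ) (P : Finset (Finset (Fin n)) → Prop) : ℝ :=
  (((allComplexes n).filter P).card : ℝ) / ((allComplexes n).card : ℝ)

/-- The Euler characteristic `χ(Δ) = Σ_{i ≥ 1} (-1)^{i-1} f_i(Δ)`, computed as a
sum over the faces of `Δ`. -/
def eulerChar {n : ℕ} (Δ : Finset (Finset (Fin n))) : ℤ :=
  ∑ x ∈ Δ, (-1 : ℤ) ^ (x.card - 1)

/-!
Fix a size `i` and call an `i`-set *switchable* in `Δ` when all its proper faces lie in `Δ` and it
lies in no larger face of `Δ`. Switchable sets can be added to or removed from `Δ` independently,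
so the complexes that agree with `Δ` away from the set `T` of its switchable `i`-sets form a cube
indexed by the subsets of `T`, along which `χ` changes by `(-1)^(i-1)` per added set. Hence `χ`
takes a given value on at most `binom(t, t/2) ≤ 2^t / √(t+1)` of the `2^t` points (`t = #T`),
a fraction `≤ 1/n²` once `t ≥ n⁴`. If instead every size has fewer than `n⁴` switchable sets,
then `Δ` has at most `n⁵` facets (facets are switchable), and there are only `2^O(n⁶)` such
complexes, which is negligible against the `2^binom(n, n/2)` complexes generated by subsets of
the middle layer. Altogether `P(χ = k) ≤ 2/n` for large `n`.
-/

open Finset Filter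

namespace Nat

theorem two_mul_add_one_mul_centralBinom_sq_le (k : ℕ) :
    (2 * k + 1) * centralBinom k ^ 2 ≤ 16 ^ k := by
  induction k with
  | zero => simp
  | succ k ih =>
    refine le_of_mul_le_mul_left ?_ (by positivity : 0 < (k + 1) ^ 2)
    calc (k + 1) ^ 2 * ((2 * (k + 1) + 1) * centralBinom (k + 1) ^ 2)
        = (2 * k + 3) * ((k + 1) * centralBinom (k + 1)) ^ 2 := by ring
      _ = 4 * (2 * k + 3) * (2 * k + 1) * ((2 * k + 1) * centralBinom k ^ 2) := by
        rw [succ_mul_centralBinom_succ]; ring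
      _ ≤ 4 * (2 * k + 3) * (2 * k + 1) * 16 ^ k := by gcongr
      _ ≤ 16 * (k + 1) ^ 2 * 16 ^ k := Nat.mul_le_mul_right _ (by nlinarith)
      _ = (k + 1) ^ 2 * 16 ^ (k + 1) := by ring

theorem succ_mul_choose_half_sq_le (t : ℕ) : (t + 1) * t.choose (t / 2) ^ 2 ≤ 4 ^ t := by
  obtain ⟨k, rfl | rfl⟩ := even_or_odd' t
  · rw [Nat.mul_div_cancel_left k two_pos, ← centralBinom_eq_two_mul_choose, pow_mul]
    exact two_mul_add_one_mul_centralBinom_sq_le k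
  · have hcentral : centralBinom (k + 1) = 2 * (2 * k + 1).choose k := by
      rw [centralBinom_eq_two_mul_choose, show 2 * (k + 1) = 2 * k + 1 + 1 by ring,
        choose_succ_succ', choose_symm_half]
      ring
    have h := two_mul_add_one_mul_centralBinom_sq_le (k + 1)
    rw [hcentral] at h
    rw [show (2 * k + 1) / 2 = k by omega]
    refine le_of_mul_le_mul_left ?_ (by norm_num : 0 < 4)
    calc 4 * ((2 * k + 1 + 1) * (2 * k + 1).choose k ^ 2)
        ≤ (2 * (k + 1) + 1) * (2 * (2 * k + 1).choose k) ^ 2 := by nlinarith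
      _ ≤ 16 ^ (k + 1) := h
      _ = 4 * 4 ^ (2 * k + 1) := by rw [pow_succ, pow_succ, pow_mul]; ring

theorem choose_half_mul_le_two_pow {t c : ℕ} (hc : c ^ 2 ≤ t + 1) :
    t.choose (t / 2) * c ≤ 2 ^ t := by
  refine (Nat.pow_le_pow_iff_left two_ne_zero).mp ?_
  calc (t.choose (t / 2) * c) ^ 2 = c ^ 2 * t.choose (t / 2) ^ 2 := by ring
    _ ≤ (t + 1) * t.choose (t / 2) ^ 2 := by gcongr
    _ ≤ 4 ^ t := succ_mul_choose_half_sq_le t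
    _ = (2 ^ t) ^ 2 := by rw [← pow_mul, mul_comm, pow_mul]; norm_num

theorem two_pow_le_succ_mul_choose_half (n : ℕ) : 2 ^ n ≤ (n + 1) * n.choose (n / 2) :=
  calc 2 ^ n = ∑ j ∈ range (n + 1), n.choose j := (sum_range_choose n).symm
    _ ≤ ∑ _j ∈ range (n + 1), n.choose (n / 2) := sum_le_sum fun j _ => choose_le_middle j n
    _ = (n + 1) * n.choose (n / 2) := by simp

end Nat

namespace Finset

variable {α β : Type*}

theorem card_filter_mul_le_of_forall_fiber [DecidableEq β] {s : Finset α} (f : α → β)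
    {p : α → Prop} [DecidablePred p] {c : ℕ}
    (h : ∀ a ∈ s, #{x ∈ s.filter (f · = f a) | p x} * c ≤ #(s.filter (f · = f a))) :
    #{x ∈ s | p x} * c ≤ #s := by
  rw [card_eq_sum_card_fiberwise (t := s.image f) fun x hx =>
      mem_image_of_mem f (filter_subset _ _ hx),
    card_eq_sum_card_fiberwise (t := s.image f) fun x hx => mem_image_of_mem f hx, sum_mul]
  refine sum_le_sum fun b hb => ?_
  obtain ⟨a, ha, rfl⟩ := mem_image.1 hb
  rw [filter_comm]
  exact h a ha

theorem card_le_choose_half_of_card_eq {T : Finset α} {𝒜 : Finset (Finset α)}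
    (h𝒜 : 𝒜 ⊆ T.powerset) (hcard : ∀ R ∈ 𝒜, ∀ R' ∈ 𝒜, #R = #R') :
    #𝒜 ≤ (#T).choose (#T / 2) := by
  obtain rfl | ⟨R₀, hR₀⟩ := 𝒜.eq_empty_or_nonempty
  · simp
  calc #𝒜 ≤ #(T.powersetCard #R₀) := card_le_card fun R hR =>
        mem_powersetCard.2 ⟨mem_powerset.1 (h𝒜 hR), hcard R hR R₀ hR₀⟩
    _ = (#T).choose #R₀ := card_powersetCard _ _
    _ ≤ (#T).choose (#T / 2) := Nat.choose_le_middle _ _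

theorem card_filter_card_le_le [Fintype α] [Nonempty α] (M : ℕ) :
    #{s : Finset α | #s ≤ M} ≤ (M + 1) * Fintype.card α ^ M :=
  calc #{s : Finset α | #s ≤ M} ≤ #((range (M + 1)).biUnion fun j => powersetCard j univ) :=
        card_le_card fun s hs => mem_biUnion.2
          ⟨#s, mem_range.2 (Nat.lt_succ_of_le (mem_filter.1 hs).2),
            mem_powersetCard.2 ⟨subset_univ s, rfl⟩⟩
    _ ≤ ∑ j ∈ range (M + 1), #(powersetCard j (univ : Finset α)) := card_biUnion_le
    _ ≤ ∑ _j ∈ range (M + 1), Fintype.card α ^ M := sum_le_sum fun j hj => by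
        rw [card_powersetCard, card_univ]
        exact (Nat.choose_le_pow _ _).trans
          (Nat.pow_le_pow_right Fintype.card_pos (Nat.lt_succ_iff.1 (mem_range.1 hj)))
    _ = (M + 1) * Fintype.card α ^ M := by simp

end Finset

section Complexes

variable {n i r : ℕ} {Δ Δ' Δ₀ R S : Finset (Finset (Fin n))} {x : Finset (Fin n)}

theorem mem_allComplexes : Δ ∈ allComplexes n ↔ IsComplex Δ := by
  simp [allComplexes]

def switchable (i : ℕ) (Δ : Finset (Finset (Fin n))) : Finset (Finset (Fin n)) :=
  {x | #x = i ∧ (∀ y, y.Nonempty → y ⊂ x → y ∈ Δ) ∧ ∀ z ∈ Δ, ¬ x ⊂ z}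

def core (i : ℕ) (Δ : Finset (Finset (Fin n))) : Finset (Finset (Fin n)) :=
  Δ \ switchable i Δ

theorem mem_switchable : x ∈ switchable i Δ ↔
    #x = i ∧ (∀ y, y.Nonempty → y ⊂ x → y ∈ Δ) ∧ ∀ z ∈ Δ, ¬ x ⊂ z := by
  simp [switchable]

theorem switchable_subset_of_forall_card_ne
    (h : ∀ x : Finset (Fin n), #x ≠ i → (x ∈ Δ ↔ x ∈ Δ')) :
    switchable i Δ ⊆ switchable i Δ' := by
  intro x hx
  obtain ⟨hxi, hsub, hsup⟩ := mem_switchable.1 hx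
  refine mem_switchable.2 ⟨hxi, fun y hy hyx => (h y ?_).1 (hsub y hy hyx),
    fun z hz hxz => hsup z ((h z ?_).2 hz) hxz⟩
  · have := card_lt_card hyx; omega
  · have := card_lt_card hxz; omega

theorem switchable_congr (h : ∀ x : Finset (Fin n), #x ≠ i → (x ∈ Δ ↔ x ∈ Δ')) :
    switchable i Δ = switchable i Δ' :=
  (switchable_subset_of_forall_card_ne h).antisymm
    (switchable_subset_of_forall_card_ne fun x hx => (h x hx).symm)

theorem mem_core_of_card_ne (hx : #x ≠ i) : x ∈ core i Δ ↔ x ∈ Δ := by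
  simp [core, mem_switchable, hx]

theorem switchable_core_union (hR : R ⊆ switchable i Δ) :
    switchable i (core i Δ ∪ R) = switchable i Δ :=
  switchable_congr fun x hx => by
    rw [mem_union, mem_core_of_card_ne hx]
    exact or_iff_left fun hxR => hx (mem_switchable.1 (hR hxR)).1

theorem core_core_union (hR : R ⊆ switchable i Δ) : core i (core i Δ ∪ R) = core i Δ := by
  rw [core, switchable_core_union hR, union_sdiff_distrib, core, Finset.sdiff_idem,
    sdiff_eq_empty_iff_subset.2 hR, union_empty]

theorem core_union_inter_switchable (hR : R ⊆ switchable i Δ) :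
    (core i Δ ∪ R) ∩ switchable i Δ = R := by
  rw [union_inter_distrib_right, core, sdiff_inter_self, empty_union, inter_eq_left.2 hR]

theorem isComplex_core_union (hi : 1 ≤ i) (hΔ : IsComplex Δ) (hR : R ⊆ switchable i Δ) :
    IsComplex (core i Δ ∪ R) := by
  refine ⟨fun x hx => ?_, fun x hx y hy hyx => ?_⟩
  · rcases mem_union.1 hx with hx | hx
    · exact hΔ.1 x (mem_sdiff.1 hx).1
    · exact card_pos.1 (by rw [(mem_switchable.1 (hR hx)).1]; omega)
  obtain rfl | hyx := eq_or_ssubset_of_subset hyx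
  · exact hx
  rcases mem_union.1 hx with hx | hx
  · have hxΔ := (mem_sdiff.1 hx).1
    exact mem_union_left _ (mem_sdiff.2 ⟨hΔ.2 x hxΔ y hy hyx.subset,
      fun hyT => (mem_switchable.1 hyT).2.2 x hxΔ hyx⟩)
  · obtain ⟨hxi, hsub, -⟩ := mem_switchable.1 (hR hx)
    have hyi : #y ≠ i := by have := card_lt_card hyx; omega
    exact mem_union_left _ ((mem_core_of_card_ne hyi).2 (hsub y hy hyx))

theorem eulerChar_core_union (hR : R ⊆ switchable i Δ) :
    eulerChar (core i Δ ∪ R) = eulerChar (core i Δ) + (-1) ^ (i - 1) * #R := by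
  have hdisj : Disjoint (core i Δ) R := disjoint_of_subset_right hR sdiff_disjoint
  rw [eulerChar, eulerChar, sum_union hdisj, add_right_inj,
    sum_congr rfl fun x hx => by rw [(mem_switchable.1 (hR hx)).1], sum_const, nsmul_eq_mul,
    mul_comm]

theorem filter_core_eq_image_powerset (hi : 1 ≤ i) (hΔ₀ : IsComplex Δ₀) :
    (allComplexes n).filter (core i · = core i Δ₀)
      = (switchable i Δ₀).powerset.image (core i Δ₀ ∪ ·) := by
  ext Δ
  simp only [mem_filter, mem_image, mem_powerset, mem_allComplexes]
  constructor
  · rintro ⟨-, hcore⟩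
    have hT : switchable i Δ = switchable i Δ₀ := switchable_congr fun x hx => by
      rw [← mem_core_of_card_ne hx, hcore, mem_core_of_card_ne hx]
    refine ⟨Δ ∩ switchable i Δ₀, inter_subset_right, ?_⟩
    rw [← hcore, ← hT, core, sdiff_union_inter]
  · rintro ⟨R, hR, rfl⟩
    exact ⟨isComplex_core_union hi hΔ₀ hR, core_core_union hR⟩

theorem card_filter_switchable_eulerChar_mul_le (hi : 1 ≤ i) (c : ℕ) (k : ℤ) :
    #{Δ ∈ allComplexes n | c ^ 2 ≤ #(switchable i Δ) ∧ eulerChar Δ = k} * c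
      ≤ #(allComplexes n) := by
  refine card_filter_mul_le_of_forall_fiber (core i) fun Δ₀ hΔ₀A => ?_
  have hΔ₀ := mem_allComplexes.1 hΔ₀A
  have hinj : Set.InjOn (core i Δ₀ ∪ ·) (switchable i Δ₀).powerset := by
    intro R hR R' hR' h
    rw [← core_union_inter_switchable (mem_powerset.1 hR),
      ← core_union_inter_switchable (mem_powerset.1 hR')]
    exact congrArg (· ∩ switchable i Δ₀) h
  rw [filter_core_eq_image_powerset hi hΔ₀, card_image_of_injOn hinj, card_powerset,
    filter_image]
  refine (Nat.mul_le_mul_right c card_image_le).trans ?_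
  by_cases hc : c ^ 2 ≤ #(switchable i Δ₀)
  · refine (Nat.mul_le_mul_right c
      (card_le_choose_half_of_card_eq (filter_subset _ _) ?_)).trans
      (Nat.choose_half_mul_le_two_pow (by omega))
    intro R hR R' hR'
    simp only [mem_filter, mem_powerset] at hR hR'
    rw [eulerChar_core_union hR.1] at hR
    rw [eulerChar_core_union hR'.1] at hR'
    have h : (-1 : ℤ) ^ (i - 1) * #R = (-1) ^ (i - 1) * #R' := by
      linarith [hR.2.2, hR'.2.2]
    exact_mod_cast mul_left_cancel₀ (pow_ne_zero _ (by norm_num)) h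
  · rw [filter_false_of_mem, card_empty, zero_mul]
    · exact Nat.zero_le _
    rintro R hR ⟨hcR, -⟩
    rw [switchable_core_union (mem_powerset.1 hR)] at hcR
    exact hc hcR

def downClosure (S : Finset (Finset (Fin n))) : Finset (Finset (Fin n)) :=
  {y | y.Nonempty ∧ ∃ x ∈ S, y ⊆ x}

theorem isComplex_downClosure (S : Finset (Finset (Fin n))) : IsComplex (downClosure S) := by
  refine ⟨fun x hx => (mem_filter.1 hx).2.1, fun x hx y hy hyx => ?_⟩
  obtain ⟨-, -, z, hz, hxz⟩ := mem_filter.1 hx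
  exact mem_filter.2 ⟨mem_univ _, hy, z, hz, hyx.trans hxz⟩

theorem filter_card_downClosure (hr : 1 ≤ r) (hS : ∀ x ∈ S, #x = r) :
    {y ∈ downClosure S | #y = r} = S := by
  ext y
  simp only [downClosure, mem_filter, mem_univ, true_and]
  constructor
  · rintro ⟨⟨-, x, hx, hyx⟩, hy⟩
    rwa [eq_of_subset_of_card_le hyx (by rw [hy, hS x hx])]
  · intro hy
    exact ⟨⟨card_pos.1 (by rw [hS y hy]; omega), y, hy, subset_rfl⟩, hS y hy⟩

theorem two_pow_choose_le_card_allComplexes (hr : 1 ≤ r) :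
    2 ^ n.choose r ≤ #(allComplexes n) := by
  calc 2 ^ n.choose r = #(powersetCard r (univ : Finset (Fin n))).powerset := by
        rw [card_powerset, card_powersetCard, card_univ, Fintype.card_fin]
    _ ≤ #(allComplexes n) := by
        refine card_le_card_of_injOn downClosure
          (fun S _ => mem_allComplexes.2 (isComplex_downClosure S)) fun S hS S' hS' h => ?_
        have hr' : ∀ {S}, S ∈ (powersetCard r (univ : Finset (Fin n))).powerset →
            ∀ x ∈ S, #x = r :=
          fun hS x hx => (mem_powersetCard.1 (mem_powerset.1 hS hx)).2
        rw [← filter_card_downClosure hr (hr' hS), ← filter_card_downClosure hr (hr' hS'),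
          h]

def facets (Δ : Finset (Finset (Fin n))) : Finset (Finset (Fin n)) :=
  {x ∈ Δ | Maximal (· ∈ Δ) x}

theorem downClosure_facets (hΔ : IsComplex Δ) : downClosure (facets Δ) = Δ := by
  ext y
  simp only [downClosure, facets, mem_filter, mem_univ, true_and]
  constructor
  · rintro ⟨hy, x, ⟨hx, -⟩, hyx⟩
    exact hΔ.2 x hx y hy hyx
  · intro hy
    obtain ⟨x, hyx, hx⟩ := exists_le_maximal Δ hy
    exact ⟨hΔ.1 y hy, x, ⟨hx.prop, hx⟩, hyx⟩

theorem card_facets_le (hΔ : IsComplex Δ) {M : ℕ}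
    (h : ∀ i ∈ Icc 1 n, #(switchable i Δ) ≤ M) : #(facets Δ) ≤ n * M := by
  have hsub : facets Δ ⊆ (Icc 1 n).biUnion (switchable · Δ) := by
    intro x hx
    obtain ⟨hxΔ, hmax⟩ := mem_filter.1 hx
    have hcard : #x ∈ Icc 1 n :=
      mem_Icc.2 ⟨card_pos.2 (hΔ.1 x hxΔ), (card_le_univ x).trans_eq (Fintype.card_fin n)⟩
    exact mem_biUnion.2 ⟨#x, hcard, mem_switchable.2
      ⟨rfl, fun y hy hyx => hΔ.2 x hxΔ y hy hyx.subset, fun z hz => hmax.not_gt hz⟩⟩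
  calc #(facets Δ) ≤ ∑ i ∈ Icc 1 n, #(switchable i Δ) :=
        (card_le_card hsub).trans card_biUnion_le
    _ ≤ ∑ _i ∈ Icc 1 n, M := sum_le_sum h
    _ = n * M := by simp

theorem card_filter_card_facets_le (M : ℕ) :
    #{Δ ∈ allComplexes n | #(facets Δ) ≤ M} ≤ (M + 1) * (2 ^ n) ^ M := by
  calc #{Δ ∈ allComplexes n | #(facets Δ) ≤ M}
        ≤ #{S : Finset (Finset (Fin n)) | #S ≤ M} := by
        refine card_le_card_of_injOn facets (fun Δ hΔ => ?_) fun Δ hΔ Δ' hΔ' h => ?_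
        · simpa using (mem_filter.1 hΔ).2
        · simp only [coe_filter, Set.mem_ofPred_eq, mem_allComplexes] at hΔ hΔ'
          rw [← downClosure_facets hΔ.1, ← downClosure_facets hΔ'.1, h]
    _ ≤ (M + 1) * Fintype.card (Finset (Fin n)) ^ M := card_filter_card_le_le M
    _ = (M + 1) * (2 ^ n) ^ M := by rw [Fintype.card_finset, Fintype.card_fin]

end Complexes

theorem card_filter_eulerChar_eq_mul_le (n c : ℕ) (k : ℤ) :
    #{Δ ∈ allComplexes n | eulerChar Δ = k} * c
      ≤ c * ((n * c ^ 2 + 1) * (2 ^ n) ^ (n * c ^ 2)) + n * #(allComplexes n) := by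
  set A := allComplexes n
  set few := {Δ ∈ A | #(facets Δ) ≤ n * c ^ 2}
  set many := fun i => {Δ ∈ A | c ^ 2 ≤ #(switchable i Δ) ∧ eulerChar Δ = k}
  have hcover : {Δ ∈ A | eulerChar Δ = k} ⊆ few ∪ (Icc 1 n).biUnion many := by
    intro Δ hΔ
    obtain ⟨hΔA, hχ⟩ := mem_filter.1 hΔ
    by_cases hbig : ∃ i ∈ Icc 1 n, c ^ 2 ≤ #(switchable i Δ)
    · obtain ⟨i, hi, hci⟩ := hbig
      exact mem_union_right _ (mem_biUnion.2 ⟨i, hi, mem_filter.2 ⟨hΔA, hci, hχ⟩⟩)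
    · push Not at hbig
      exact mem_union_left _ (mem_filter.2
        ⟨hΔA, card_facets_le (mem_allComplexes.1 hΔA) fun i hi => (hbig i hi).le⟩)
  calc #{Δ ∈ A | eulerChar Δ = k} * c ≤ (#few + ∑ i ∈ Icc 1 n, #(many i)) * c := by
        gcongr
        exact (card_le_card hcover).trans
          ((card_union_le _ _).trans (by gcongr; exact card_biUnion_le))
    _ = c * #few + ∑ i ∈ Icc 1 n, #(many i) * c := by rw [add_mul, sum_mul, mul_comm]
    _ ≤ c * ((n * c ^ 2 + 1) * (2 ^ n) ^ (n * c ^ 2)) + ∑ _i ∈ Icc 1 n, #A := by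
        gcongr with i hi
        · exact card_filter_card_facets_le _
        · exact card_filter_switchable_eulerChar_mul_le (mem_Icc.1 hi).1 c k
    _ = c * ((n * c ^ 2 + 1) * (2 ^ n) ^ (n * c ^ 2)) + n * #A := by simp

theorem eventually_four_mul_pow_eight_le_two_pow :
    ∀ᶠ n : ℕ in atTop, 4 * n ^ 8 ≤ 2 ^ n := by
  have h := tendsto_pow_const_div_const_pow_of_one_lt 8 (one_lt_two (α := ℝ))
  filter_upwards [h.eventually_lt_const (show (0 : ℝ) < 1 / 4 by norm_num)] with n hn
  rw [div_lt_iff₀ (by positivity)] at hn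
  exact_mod_cast (by linarith : (4 : ℝ) * n ^ 8 ≤ 2 ^ n)

theorem eventually_mul_le_two_pow_choose_half :
    ∀ᶠ n : ℕ in atTop, n * ((n * (n ^ 2) ^ 2 + 1) * (2 ^ n) ^ (n * (n ^ 2) ^ 2))
      ≤ 2 ^ n.choose (n / 2) := by
  filter_upwards [eventually_four_mul_pow_eight_le_two_pow, eventually_ge_atTop 2]
    with n h8 hn
  have hC : 2 * n ^ 7 ≤ n.choose (n / 2) := by
    refine le_of_mul_le_mul_left ?_ (by omega : 0 < n + 1)
    calc (n + 1) * (2 * n ^ 7) ≤ 2 * n * (2 * n ^ 7) := Nat.mul_le_mul_right _ (by omega)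
      _ = 4 * n ^ 8 := by ring
      _ ≤ 2 ^ n := h8
      _ ≤ (n + 1) * n.choose (n / 2) := Nat.two_pow_le_succ_mul_choose_half n
  have h67 : n ^ 6 ≤ n ^ 7 := Nat.pow_le_pow_right (by omega) (by omega)
  have hpoly : n * (n * (n ^ 2) ^ 2 + 1) ≤ n ^ 7 := by
    have : n ≤ n ^ 6 := Nat.le_self_pow (by norm_num) n
    nlinarith
  calc n * ((n * (n ^ 2) ^ 2 + 1) * (2 ^ n) ^ (n * (n ^ 2) ^ 2))
      = n * (n * (n ^ 2) ^ 2 + 1) * 2 ^ n ^ 6 := by rw [← pow_mul]; ring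
    _ ≤ 2 ^ n ^ 7 * 2 ^ n ^ 6 := Nat.mul_le_mul_right _ (hpoly.trans Nat.lt_two_pow_self.le)
    _ = 2 ^ (n ^ 7 + n ^ 6) := (pow_add _ _ _).symm
    _ ≤ 2 ^ n.choose (n / 2) := Nat.pow_le_pow_right two_pos (by omega)

theorem eventually_uniformProb_eulerChar_eq_le :
    ∀ᶠ n : ℕ in atTop, ∀ k : ℤ, uniformProb n (fun Δ => eulerChar Δ = k) ≤ 2 / n := by
  filter_upwards [eventually_mul_le_two_pow_choose_half, eventually_ge_atTop 2]
    with n hsmall hn k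
  set N := #(allComplexes n)
  set E := #{Δ ∈ allComplexes n | eulerChar Δ = k}
  set S := (n * (n ^ 2) ^ 2 + 1) * (2 ^ n) ^ (n * (n ^ 2) ^ 2)
  have hN : 2 ^ n.choose (n / 2) ≤ N := two_pow_choose_le_card_allComplexes (by omega)
  have hE : E * n ≤ 2 * N := by
    refine le_of_mul_le_mul_left ?_ (by omega : 0 < n)
    calc n * (E * n) = E * n ^ 2 := by ring
      _ ≤ n ^ 2 * S + n * N := card_filter_eulerChar_eq_mul_le n (n ^ 2) k
      _ = n * (n * S) + n * N := by ring
      _ ≤ n * N + n * N := by gcongr; exact hsmall.trans hN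
      _ = n * (2 * N) := by ring
  rw [uniformProb, filter_congr_decidable,
    div_le_div_iff₀ (by exact_mod_cast (Nat.one_le_two_pow.trans hN)) (by positivity)]
  exact_mod_cast hE

/-- For any integer function `k(n)` and `Δ ~ U(n)`, with high probability
`χ(Δ) ≠ k(n)`. -/
theorem stmt11 (k : ℕ → ℤ) :
    Filter.Tendsto (fun n : ℕ => uniformProb n (fun Δ => eulerChar Δ = k n))
      Filter.atTop (nhds 0) := by
  refine squeeze_zero' (Eventually.of_forall fun n => ?_) ?_
    (tendsto_const_div_atTop_nhds_zero_nat 2)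
  · rw [uniformProb]
    positivity
  · filter_upwards [eventually_uniformProb_eulerChar_eq_le] with n hn using hn (k n)
end
end

section
/- The proportion of monotone Boolean functions on n variables that are evasive tends to 1 as n → ∞; that is, the number of evasive monotone functions f : {0,1}^n → {0,1} divided by the total number of monotone functions f : {0,1}^n → {0,1} tends to 1. -/
/-!
Write `signedSum f = ∑_{f x = true} (-1)^|x|`. A decision tree of depth `< n` cuts the cube into
subcubes of positive dimension on which `f` is constant, and the signs cancel on each of them, so
`signedSum f = 0` whenever `f` is not evasive.

Call `x` free for a monotone `f` if `f` vanishes strictly below `x` and is `1` strictly above it.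
On the `k` free points of one level (an antichain) the values of `f` can be chosen at will, which
gives a fibre of `2 ^ k` monotone functions along which `signedSum` moves by `±1` per point
switched on; at most `choose k t ≤ 2 * 2 ^ k / √(k + 1)` of them have `signedSum = 0`. So a
vanishing signed sum is rare among monotone functions having a level with `n ^ 4` free points.
Every other monotone function has fewer than `(n + 1) * n ^ 4` minimal true points, which determine
it, so there are only `2 ^ O(n ^ 6)` of them, against at least `2 ^ (2 ^ n / (n + 1))` monotone
functions built on the largest level.
-/

open scoped Classical

inductive DTree (n : ℕ) : Type where
  | leaf : Bool → DTree n
  | node : Fin n → DTree n → DTree n → DTree n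

def DTree.eval {n : ℕ} : DTree n → (Fin n → Bool) → Bool
  | .leaf b, _ => b
  | .node i t0 t1, x => if x i then DTree.eval t1 x else DTree.eval t0 x

def DTree.depth {n : ℕ} : DTree n → ℕ
  | .leaf _ => 0
  | .node _ t0 t1 => 1 + max (DTree.depth t0) (DTree.depth t1)

/-- A Boolean function on `n` variables is evasive if its decision tree
complexity is `n`, i.e. every decision tree computing it has depth at least
`n`. -/
def Evasive {n : ℕ} (f : (Fin n → Bool) → Bool) : Prop :=
  ∀ T : DTree n, (∀ x, T.eval x = f x) → n ≤ T.depth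

open Finset Filter

theorem two_mul_add_one_mul_centralBinom_sq_le (j : ℕ) :
    (2 * j + 1) * j.centralBinom ^ 2 ≤ 16 ^ j := by
  induction j with
  | zero => simp
  | succ j ih =>
    have hsq : (j + 1) ^ 2 * (j + 1).centralBinom ^ 2
        = 4 * (2 * j + 1) ^ 2 * j.centralBinom ^ 2 := by
      rw [← mul_pow, Nat.succ_mul_centralBinom_succ]; ring
    refine Nat.le_of_mul_le_mul_left (c := (j + 1) ^ 2) ?_ (pow_pos j.succ_pos 2)
    calc (j + 1) ^ 2 * ((2 * (j + 1) + 1) * (j + 1).centralBinom ^ 2)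
        = 4 * (2 * j + 3) * (2 * j + 1) * ((2 * j + 1) * j.centralBinom ^ 2) := by
          rw [mul_left_comm, hsq]; ring
      _ ≤ 4 * (2 * j + 3) * (2 * j + 1) * 16 ^ j := by gcongr
      _ ≤ 16 * (j + 1) ^ 2 * 16 ^ j := Nat.mul_le_mul_right _ (by nlinarith)
      _ = (j + 1) ^ 2 * 16 ^ (j + 1) := by ring

theorem succ_mul_choose_sq_le (k t : ℕ) : (k + 1) * k.choose t ^ 2 ≤ 4 ^ (k + 1) := by
  set j := (k + 1) / 2
  have hchoose : k.choose t ≤ j.centralBinom :=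
    (Nat.choose_le_choose t (by omega)).trans (Nat.choose_le_centralBinom t j)
  calc (k + 1) * k.choose t ^ 2 ≤ (2 * j + 1) * j.centralBinom ^ 2 := by
        gcongr; omega
    _ ≤ 16 ^ j := two_mul_add_one_mul_centralBinom_sq_le j
    _ = 4 ^ (2 * j) := by rw [pow_mul]; norm_num
    _ ≤ 4 ^ (k + 1) := Nat.pow_le_pow_right (by norm_num) (by omega)

theorem choose_mul_le_of_sq_le {k m : ℕ} (t : ℕ) (h : m ^ 2 ≤ k + 1) :
    k.choose t * m ≤ 2 * 2 ^ k := by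
  refine (Nat.pow_le_pow_iff_left two_ne_zero).1 ?_
  calc (k.choose t * m) ^ 2 = k.choose t ^ 2 * m ^ 2 := mul_pow _ _ _
    _ ≤ k.choose t ^ 2 * (k + 1) := by gcongr
    _ ≤ 4 ^ (k + 1) := by rw [mul_comm]; exact succ_mul_choose_sq_le k t
    _ = (2 * 2 ^ k) ^ 2 := by rw [mul_pow, ← pow_mul, mul_comm k, pow_mul]; ring

theorem mul_two_pow_mul_le {n : ℕ} (hn : 1 ≤ n) (h : 12 * n ^ 7 ≤ 2 ^ n) :
    (n + 1) * n ^ 4 * (2 ^ n) ^ ((n + 1) * n ^ 4) * n ≤ 2 ^ (2 ^ n / (n + 1)) := by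
  set s := (n + 1) * n ^ 4
  have hexp : s + n * s + n ≤ 2 ^ n / (n + 1) := by
    rw [Nat.le_div_iff_mul_le n.succ_pos]
    have hs : 1 ≤ s := Nat.one_le_iff_ne_zero.2 (by positivity)
    calc (s + n * s + n) * (n + 1) ≤ 3 * n * s * (n + 1) := by gcongr; nlinarith
      _ = 3 * n ^ 5 * (n + 1) ^ 2 := by ring
      _ ≤ 3 * n ^ 5 * (4 * n ^ 2) := by gcongr; nlinarith
      _ = 12 * n ^ 7 := by ring
      _ ≤ 2 ^ n := h
  calc s * (2 ^ n) ^ s * n ≤ 2 ^ s * (2 ^ n) ^ s * 2 ^ n := by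
        gcongr <;> exact Nat.lt_two_pow_self.le
    _ = 2 ^ (s + n * s + n) := by rw [← pow_mul, ← pow_add, ← pow_add]
    _ ≤ 2 ^ (2 ^ n / (n + 1)) := Nat.pow_le_pow_right two_pos hexp

theorem eventually_mul_pow_le_two_pow (c k : ℕ) :
    ∀ᶠ n : ℕ in atTop, c * n ^ k ≤ 2 ^ n := by
  have hlim := tendsto_pow_const_div_const_pow_of_one_lt k one_lt_two
  filter_upwards [hlim.eventually (gt_mem_nhds (show (0 : ℝ) < 1 / (c + 1) by positivity))]
    with n hn
  rw [lt_div_iff₀ (by positivity), div_mul_eq_mul_div, div_lt_one (by positivity)] at hn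
  have : n ^ k * (c + 1) < 2 ^ n := by exact_mod_cast hn
  calc c * n ^ k ≤ n ^ k * (c + 1) := by rw [mul_comm]; exact Nat.mul_le_mul_left _ c.le_succ
    _ ≤ 2 ^ n := this.le

theorem Finset.card_filter_and_div_eq_one_sub {β : Type*} [Fintype β] (p q : β → Prop)
    [DecidablePred p] [DecidablePred q] (hp : 0 < #{x | p x}) :
    (#{x | p x ∧ q x} : ℝ) / #{x | p x} = 1 - (#{x | p x ∧ ¬q x} : ℝ) / #{x | p x} := by
  have hsplit := card_filter_add_card_filter_not (s := {x | p x}) q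
  simp only [filter_filter] at hsplit
  rw [eq_sub_iff_add_eq, ← add_div, div_eq_one_iff_eq (by positivity)]
  exact_mod_cast hsplit

theorem Finset.card_filter_mul_le_of_fiberwise {ι κ : Type*} [DecidableEq κ] {s : Finset ι}
    (g : ι → κ) (p : ι → Prop) [DecidablePred p] {a b : ℕ}
    (h : ∀ y ∈ s.image g, #{x ∈ s | p x ∧ g x = y} * a ≤ b * #{x ∈ s | g x = y}) :
    #{x ∈ s | p x} * a ≤ b * #s := by
  have hmaps : ∀ t ⊆ s, Set.MapsTo g t (s.image g) :=
    fun t ht x hx => mem_image_of_mem g (ht hx)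
  calc #{x ∈ s | p x} * a = ∑ y ∈ s.image g, #{x ∈ s | p x ∧ g x = y} * a := by
        rw [card_eq_sum_card_fiberwise (hmaps _ (filter_subset _ _)), sum_mul]
        simp only [filter_filter]
    _ ≤ ∑ y ∈ s.image g, b * #{x ∈ s | g x = y} := sum_le_sum h
    _ = b * #s := by rw [← mul_sum, ← card_eq_sum_card_fiberwise (hmaps s subset_rfl)]

theorem Finset.card_filter_card_lt_le {α : Type*} [Fintype α] [Nonempty α] (s : ℕ) :
    #{S : Finset α | #S < s} ≤ s * Fintype.card α ^ s := by
  calc #{S : Finset α | #S < s}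
      ≤ #((range s).biUnion fun j => powersetCard j (univ : Finset α)) := by
        refine card_le_card fun S hS => ?_
        simp only [mem_filter, mem_univ, true_and] at hS
        exact mem_biUnion.2 ⟨#S, mem_range.2 hS, mem_powersetCard.2 ⟨subset_univ S, rfl⟩⟩
    _ ≤ ∑ j ∈ range s, #(powersetCard j (univ : Finset α)) := card_biUnion_le
    _ ≤ ∑ _j ∈ range s, Fintype.card α ^ s := by
        refine sum_le_sum fun j hj => ?_
        rw [card_powersetCard, card_univ]
        exact (Nat.choose_le_pow _ _).trans
          (Nat.pow_le_pow_right Fintype.card_pos (mem_range.1 hj).le)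
    _ = s * Fintype.card α ^ s := by rw [sum_const, card_range, smul_eq_mul]

section MonotoneBool

variable {α : Type*} [PartialOrder α] [Fintype α]

noncomputable def upperClosureIndicator (S : Set α) (x : α) : Bool :=
  decide (x ∈ upperClosure S)

theorem monotone_upperClosureIndicator (S : Set α) : Monotone (upperClosureIndicator S) :=
  fun _ _ hxy => Bool.le_iff_imp.2 fun h => by
    simp only [upperClosureIndicator, decide_eq_true_eq] at h ⊢
    exact (upperClosure S).upper hxy h

theorem upperClosureIndicator_setOf_minimal {f : α → Bool} (hf : Monotone f) :
    upperClosureIndicator {x | Minimal (f · = true) x} = f := by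
  funext x
  rw [Bool.eq_iff_iff, upperClosureIndicator, decide_eq_true_iff, mem_upperClosure]
  constructor
  · rintro ⟨a, ha, hax⟩
    exact Bool.le_iff_imp.1 (hf hax) (show Minimal (f · = true) a from ha).prop
  · intro hx
    obtain ⟨a, hax, ha⟩ := exists_minimal_le_of_wellFoundedLT (f · = true) x hx
    exact ⟨a, ha, hax⟩

theorem card_monotone_pos [DecidableEq α] : 0 < #{f : α → Bool | Monotone f} :=
  card_pos.2 ⟨fun _ => true, by simp [monotone_const]⟩

theorem two_pow_card_le_card_monotone [DecidableEq α] {A : Finset α}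
    (hA : IsAntichain (· ≤ ·) (A : Set α)) :
    2 ^ #A ≤ #{f : α → Bool | Monotone f} := by
  rw [← card_powerset]
  refine card_le_card_of_injOn (fun S => upperClosureIndicator (S : Set α))
    (fun S _ => by simpa using monotone_upperClosureIndicator _) ?_
  have key : ∀ S ∈ A.powerset, ∀ T ∈ A.powerset,
      upperClosureIndicator (S : Set α) = upperClosureIndicator T → S ⊆ T := by
    intro S hS T hT hST a ha
    have := congrFun hST a
    simp only [upperClosureIndicator, decide_eq_decide, mem_upperClosure] at this
    obtain ⟨b, hb, hba⟩ := this.1 ⟨a, ha, le_rfl⟩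
    rwa [← hA.eq (mem_powerset.1 hT hb) (mem_powerset.1 hS ha) hba]
  exact fun S hS T hT hST => (key S hS T hT hST).antisymm (key T hT S hS hST.symm)

theorem card_monotone_card_minimal_lt_le [DecidableEq α] [Nonempty α] (s : ℕ) :
    #{f : α → Bool | Monotone f ∧ #{x | Minimal (f · = true) x} < s}
      ≤ s * Fintype.card α ^ s := by
  refine (card_le_card_of_injOn (fun f => ({x | Minimal (f · = true) x} : Finset α))
    (fun f hf => ?_) fun f hf g hg hfg => ?_).trans (card_filter_card_lt_le s)
  · simpa using (mem_filter.1 hf).2.2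
  · simp only [coe_filter, mem_univ, true_and, Set.mem_ofPred_eq] at hf hg
    rw [← upperClosureIndicator_setOf_minimal hf.1, ← upperClosureIndicator_setOf_minimal hg.1]
    simpa using congrArg (fun S : Finset α => upperClosureIndicator (S : Set α)) hfg

end MonotoneBool

noncomputable def setOn {α : Type*} (g : α → Bool) (T : Finset α) (x : α) : Bool :=
  if x ∈ T then true else g x

theorem setOn_injOn {α : Type*} {g : α → Bool} {F : Finset α} (hg : ∀ x ∈ F, g x = false) :
    Set.InjOn (setOn g) (F.powerset : Set (Finset α)) := by
  have key : ∀ T ∈ F.powerset, ∀ T', setOn g T = setOn g T' → T ⊆ T' := by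
    intro T hT T' hTT' x hx
    have := congrFun hTT' x
    rw [setOn, setOn, if_pos hx, hg x (mem_powerset.1 hT hx)] at this
    by_contra hx'
    simp [hx'] at this
  exact fun T hT T' hT' h => (key T hT T' h).antisymm (key T' hT' T h.symm)

section FreePoints

variable {α : Type*} [PartialOrder α]

def IsFreePoint (f : α → Bool) (x : α) : Prop :=
  (∀ y < x, f y = false) ∧ ∀ y, x < y → f y = true

noncomputable def freePointsIn (f : α → Bool) (A : Finset α) : Finset α :=
  {x ∈ A | IsFreePoint f x}

noncomputable def clearOn (A : Finset α) (f : α → Bool) (x : α) : Bool :=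
  if x ∈ freePointsIn f A then false else f x

theorem isFreePoint_of_minimal {f : α → Bool} (hf : Monotone f) {x : α}
    (hx : Minimal (f · = true) x) : IsFreePoint f x :=
  ⟨fun _ hy => by simpa using hx.not_prop_of_lt hy,
    fun _ hy => Bool.le_iff_imp.1 (hf hy.le) hx.prop⟩

variable {A : Finset α}

theorem freePointsIn_congr (hA : IsAntichain (· ≤ ·) (A : Set α)) {f f' : α → Bool}
    (h : ∀ x ∉ A, f x = f' x) : freePointsIn f A = freePointsIn f' A := by
  refine filter_congr fun x hx => ?_
  have lt : ∀ y < x, f y = f' y := fun y hy => h y fun hyA => hA.not_lt hyA hx hy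
  have gt : ∀ y, x < y → f y = f' y := fun y hy => h y fun hyA => hA.not_lt hx hyA hy
  exact and_congr (forall₂_congr fun y hy => by rw [lt y hy])
    (forall₂_congr fun y hy => by rw [gt y hy])

theorem freePointsIn_clearOn (hA : IsAntichain (· ≤ ·) (A : Set α)) (f : α → Bool) :
    freePointsIn (clearOn A f) A = freePointsIn f A :=
  freePointsIn_congr hA fun x hx => by
    rw [clearOn, if_neg (show x ∉ freePointsIn f A from fun h => hx (mem_filter.1 h).1)]

theorem freePointsIn_setOn (hA : IsAntichain (· ≤ ·) (A : Set α)) (g : α → Bool)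
    {T : Finset α} (hT : T ⊆ A) : freePointsIn (setOn g T) A = freePointsIn g A :=
  freePointsIn_congr hA fun x hx => by rw [setOn, if_neg fun h => hx (hT h)]

theorem clearOn_eq_false_of_mem (hA : IsAntichain (· ≤ ·) (A : Set α)) {f : α → Bool}
    {x : α} (hx : x ∈ freePointsIn (clearOn A f) A) : clearOn A f x = false := by
  rw [freePointsIn_clearOn hA] at hx
  rw [clearOn, if_pos hx]

theorem monotone_clearOn {f : α → Bool} (hf : Monotone f) : Monotone (clearOn A f) := by
  intro x y hxy
  refine Bool.le_iff_imp.2 fun hx => ?_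
  have hxF : x ∉ freePointsIn f A := fun h => by simp [clearOn, h] at hx
  have hfx : f x = true := by simpa [clearOn, hxF] using hx
  have hyF : y ∉ freePointsIn f A := fun hyF => by
    obtain rfl | hlt := hxy.eq_or_lt
    · exact hxF hyF
    · simp [(mem_filter.1 hyF).2.1 x hlt] at hfx
  simpa [clearOn, hyF] using Bool.le_iff_imp.1 (hf hxy) hfx

theorem monotone_setOn {g : α → Bool} (hg : Monotone g) {T : Finset α}
    (hT : T ⊆ freePointsIn g A) : Monotone (setOn g T) := by
  intro x y hxy
  refine Bool.le_iff_imp.2 fun hx => ?_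
  by_cases hyT : y ∈ T
  · simp [setOn, hyT]
  rw [setOn, if_neg hyT]
  by_cases hxT : x ∈ T
  · obtain rfl | hlt := hxy.eq_or_lt
    · exact absurd hxT hyT
    · exact (mem_filter.1 (hT hxT)).2.2 y hlt
  · exact Bool.le_iff_imp.1 (hg hxy) (by simpa [setOn, hxT] using hx)

theorem clearOn_setOn (hA : IsAntichain (· ≤ ·) (A : Set α)) {g : α → Bool}
    (hg : ∀ x ∈ freePointsIn g A, g x = false) {T : Finset α} (hT : T ⊆ freePointsIn g A) :
    clearOn A (setOn g T) = g := by
  funext x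
  rw [clearOn, freePointsIn_setOn hA g (hT.trans (filter_subset _ _))]
  by_cases hxF : x ∈ freePointsIn g A
  · rw [if_pos hxF, hg x hxF]
  · rw [if_neg hxF, setOn, if_neg fun hxT => hxF (hT hxT)]

theorem setOn_clearOn (f : α → Bool) (A : Finset α) :
    setOn (clearOn A f) {x ∈ freePointsIn f A | f x = true} = f := by
  funext x
  by_cases hx : x ∈ freePointsIn f A <;> cases hfx : f x <;> simp [setOn, clearOn, hx, hfx]

variable [Fintype α] [DecidableEq α]

theorem filter_clearOn_eq_image (hA : IsAntichain (· ≤ ·) (A : Set α)) {g : α → Bool}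
    (hg : Monotone g) (hg0 : ∀ x ∈ freePointsIn g A, g x = false) :
    ({f | Monotone f ∧ clearOn A f = g} : Finset (α → Bool))
      = (freePointsIn g A).powerset.image (setOn g) := by
  ext f
  simp only [mem_filter, mem_univ, true_and, mem_image, mem_powerset]
  constructor
  · rintro ⟨-, rfl⟩
    refine ⟨_, ?_, setOn_clearOn f A⟩
    rw [freePointsIn_clearOn hA]
    exact filter_subset _ _
  · rintro ⟨T, hT, rfl⟩
    exact ⟨monotone_setOn hg hT, clearOn_setOn hA hg0 hT⟩

theorem card_filter_clearOn_eq (hA : IsAntichain (· ≤ ·) (A : Set α)) {g : α → Bool}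
    (hg : Monotone g) (hg0 : ∀ x ∈ freePointsIn g A, g x = false) :
    #{f : α → Bool | Monotone f ∧ clearOn A f = g} = 2 ^ #(freePointsIn g A) := by
  rw [filter_clearOn_eq_image hA hg hg0, card_image_of_injOn (setOn_injOn hg0), card_powerset]

end FreePoints

section Cube

variable {n : ℕ}

def weight (x : Fin n → Bool) : ℕ := #{i | x i = true}

noncomputable def level (n l : ℕ) : Finset (Fin n → Bool) := {x | weight x = l}

theorem weight_le (x : Fin n → Bool) : weight x ≤ n :=
  (card_le_univ _).trans_eq (Fintype.card_fin n)

theorem weight_strictMono : StrictMono (weight (n := n)) := by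
  intro x y hxy
  refine card_lt_card (Finset.ssubset_iff_subset_ne.2
    ⟨fun i hi => ?_, fun h => hxy.ne (funext fun i => ?_)⟩)
  · simp only [mem_filter, mem_univ, true_and] at hi ⊢
    exact Bool.le_iff_imp.1 (hxy.le i) hi
  · have := congrArg (i ∈ ·) h
    simp only [mem_filter, mem_univ, true_and, eq_iff_iff] at this
    exact Bool.eq_iff_iff.2 this

theorem isAntichain_level (l : ℕ) :
    IsAntichain (· ≤ ·) (level n l : Set (Fin n → Bool)) := by
  intro x hx y hy hne hxy
  simp only [level, coe_filter, mem_univ, true_and, Set.mem_ofPred_eq] at hx hy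
  exact (weight_strictMono (lt_of_le_of_ne hxy hne)).ne (hx.trans hy.symm)

theorem exists_two_pow_div_le_card_level (n : ℕ) : ∃ l, 2 ^ n / (n + 1) ≤ #(level n l) := by
  obtain ⟨l, -, hl⟩ := exists_le_card_fiber_of_mul_le_card_of_maps_to (s := univ)
    (f := weight (n := n)) (t := range (n + 1))
    (fun x _ => mem_range.2 (Nat.lt_succ_of_le (weight_le x)))
    nonempty_range_add_one (by simpa [card_range] using Nat.mul_div_le (2 ^ n) (n + 1))
  exact ⟨l, hl⟩

theorem neg_one_pow_weight (x : Fin n → Bool) :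
    (-1 : ℤ) ^ weight x = ∏ i, if x i then -1 else 1 := by
  rw [prod_ite, prod_const, prod_const_one, mul_one, weight]

theorem neg_one_pow_weight_update_not (x : Fin n → Bool) (i : Fin n) :
    (-1 : ℤ) ^ weight (Function.update x i (!x i)) = -(-1) ^ weight x := by
  simp only [neg_one_pow_weight, ← mul_prod_erase univ _ (mem_univ i), Function.update_self]
  rw [prod_congr rfl fun j hj => by rw [Function.update_of_ne (ne_of_mem_erase hj)]]
  cases x i <;> simp

noncomputable def signedSum (f : (Fin n → Bool) → Bool) : ℤ :=
  ∑ x, if f x then (-1) ^ weight x else 0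

theorem signedSum_setOn {g : (Fin n → Bool) → Bool} {l : ℕ} {T : Finset (Fin n → Bool)}
    (hT : T ⊆ level n l) (hg : ∀ x ∈ T, g x = false) :
    signedSum (setOn g T) = signedSum g + (-1) ^ l * #T := by
  have hterm : ∀ x, (if setOn g T x then (-1 : ℤ) ^ weight x else 0)
      = (if g x then (-1) ^ weight x else 0) + if x ∈ T then (-1) ^ l else 0 := by
    intro x
    by_cases hx : x ∈ T
    · simp [setOn, hx, hg x hx, (mem_filter.1 (hT hx)).2]
    · simp [setOn, hx]
  rw [signedSum, sum_congr rfl fun x _ => hterm x, sum_add_distrib, sum_ite_mem, univ_inter,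
    sum_const, nsmul_eq_mul, mul_comm, signedSum]

end Cube

section DecisionTree

variable {n : ℕ} {R : Type*} [AddCommGroup R]

def FlipAntisymmOn (F : Finset (Fin n)) (φ : (Fin n → Bool) → R) : Prop :=
  ∀ i ∈ F, ∀ x, φ (Function.update x i (!x i)) = -φ x

theorem sum_eq_zero_of_flipAntisymmOn {F : Finset (Fin n)} {φ : (Fin n → Bool) → R}
    (hφ : FlipAntisymmOn F φ) (hF : F.Nonempty) : ∑ x, φ x = 0 := by
  obtain ⟨i, hi⟩ := hF
  refine sum_involution (fun x _ => Function.update x i (!x i)) (fun x _ => ?_)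
    (fun x _ _ h => ?_) (fun _ _ => mem_univ _) (fun x _ => ?_)
  · rw [hφ i hi x, add_neg_cancel]
  · simpa using congrFun h i
  · simp

theorem FlipAntisymmOn.erase_ite {F : Finset (Fin n)} {φ : (Fin n → Bool) → R}
    (hφ : FlipAntisymmOn F φ) (i : Fin n) (b : Bool) :
    FlipAntisymmOn (F.erase i) fun x => if x i = b then φ x else 0 := by
  intro j hj x
  dsimp only
  rw [Function.update_of_ne (ne_of_mem_erase hj).symm, hφ j (mem_of_mem_erase hj) x]
  split_ifs <;> simp

-- Each branch of a query at `i` sees `φ` cut down to a half-cube `x i = b`, still antisymmetric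
-- under the flips in `F.erase i`: the depth drops by one and `#F` by at most one.
theorem DTree.sum_ite_eval_eq_zero (T : DTree n) {F : Finset (Fin n)} {φ : (Fin n → Bool) → R}
    (hφ : FlipAntisymmOn F φ) (hT : T.depth < #F) :
    ∑ x, (if T.eval x then φ x else 0) = 0 := by
  induction T generalizing F φ with
  | leaf b =>
    cases b
    · simp [DTree.eval]
    · simpa [DTree.eval] using sum_eq_zero_of_flipAntisymmOn hφ (card_pos.1 hT)
  | node i t0 t1 ih0 ih1 =>
    have hcard : #F - 1 ≤ #(F.erase i) := pred_card_le_card_erase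
    have hsplit : ∀ x, (if (DTree.node i t0 t1).eval x then φ x else 0)
        = (if t1.eval x then (if x i = true then φ x else 0) else 0)
          + if t0.eval x then (if x i = false then φ x else 0) else 0 := by
      intro x
      cases hx : x i <;> simp [DTree.eval, hx]
    simp only [DTree.depth] at hT
    rw [sum_congr rfl fun x _ => hsplit x, sum_add_distrib,
      ih1 (hφ.erase_ite i true) (by omega), ih0 (hφ.erase_ite i false) (by omega),
      add_zero]

theorem signedSum_eq_zero_of_not_evasive {f : (Fin n → Bool) → Bool} (hf : ¬Evasive f) :
    signedSum f = 0 := by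
  simp only [Evasive, not_forall, not_le] at hf
  obtain ⟨T, hTf, hT⟩ := hf
  have hφ : FlipAntisymmOn univ fun x : Fin n → Bool => (-1 : ℤ) ^ weight x :=
    fun i _ x => neg_one_pow_weight_update_not x i
  simpa [signedSum, hTf] using T.sum_ite_eval_eq_zero hφ (by simpa using hT)

end DecisionTree

section Counting

variable {n : ℕ}

theorem card_fiber_signedSum_eq_zero_mul_le {l m : ℕ} {g : (Fin n → Bool) → Bool}
    (hg : Monotone g) (hg0 : ∀ x ∈ freePointsIn g (level n l), g x = false)
    (hm : m ^ 2 ≤ #(freePointsIn g (level n l))) :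
    #{f | Monotone f ∧ signedSum f = 0 ∧ clearOn (level n l) f = g} * m
      ≤ 2 * #{f | Monotone f ∧ clearOn (level n l) f = g} := by
  have hA := isAntichain_level (n := n) l
  set F := freePointsIn g (level n l)
  set t := ((-1 : ℤ) ^ l * -signedSum g).toNat
  have hsub : ({f | Monotone f ∧ signedSum f = 0 ∧ clearOn (level n l) f = g} :
      Finset ((Fin n → Bool) → Bool)) ⊆ (powersetCard t F).image (setOn g) := by
    intro f hf
    simp only [mem_filter, mem_univ, true_and] at hf
    have hfF : f ∈ F.powerset.image (setOn g) := by
      rw [← filter_clearOn_eq_image hA hg hg0]; simp [hf.1, hf.2.2]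
    obtain ⟨T, hT, rfl⟩ := mem_image.1 hfF
    have hTF := mem_powerset.1 hT
    have hsum := hf.2.1
    rw [signedSum_setOn (hTF.trans (filter_subset _ _)) fun x hx => hg0 x (hTF hx)] at hsum
    refine mem_image_of_mem _ (mem_powersetCard.2 ⟨hTF, ?_⟩)
    -- `hsum : signedSum g + (-1) ^ l * #T = 0` pins down `#T`
    rcases neg_one_pow_eq_or ℤ l with h | h <;> rw [h] at hsum <;> simp only [t, h] <;> omega
  calc _ ≤ (#F).choose t * m := by
        gcongr
        exact (card_le_card hsub).trans (card_image_le.trans (card_powersetCard t F).le)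
    _ ≤ 2 * 2 ^ #F := choose_mul_le_of_sq_le t (by omega)
    _ = _ := by rw [card_filter_clearOn_eq hA hg hg0]

theorem card_monotone_signedSum_eq_zero_mul_le (l : ℕ) {m K : ℕ} (hK : m ^ 2 ≤ K) :
    #{f : (Fin n → Bool) → Bool |
        Monotone f ∧ signedSum f = 0 ∧ K ≤ #(freePointsIn f (level n l))} * m
      ≤ 2 * #{f : (Fin n → Bool) → Bool | Monotone f} := by
  have hA := isAntichain_level (n := n) l
  set s : Finset ((Fin n → Bool) → Bool) :=
    {f | Monotone f ∧ K ≤ #(freePointsIn f (level n l))}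
  have hbad : ({f | Monotone f ∧ signedSum f = 0 ∧ K ≤ #(freePointsIn f (level n l))} :
      Finset ((Fin n → Bool) → Bool)) = {f ∈ s | signedSum f = 0} := by
    ext f; simp only [s, mem_filter, mem_univ, true_and]; tauto
  have hs : s ⊆ ({f | Monotone f} : Finset ((Fin n → Bool) → Bool)) :=
    monotone_filter_right univ fun _ _ h => h.1
  rw [hbad]
  refine (card_filter_mul_le_of_fiberwise (clearOn (level n l)) _ fun g hg => ?_).trans
    (Nat.mul_le_mul_left 2 (card_le_card hs))
  obtain ⟨f₀, hf₀, rfl⟩ := mem_image.1 hg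
  simp only [s, mem_filter, mem_univ, true_and] at hf₀
  have hfree : ∀ f,
      freePointsIn (clearOn (level n l) f) (level n l) = freePointsIn f (level n l) :=
    freePointsIn_clearOn hA
  calc _ ≤ #{f | Monotone f ∧ signedSum f = 0 ∧
          clearOn (level n l) f = clearOn (level n l) f₀} * m := by
        gcongr
        intro f hf
        simp only [s, mem_filter, mem_univ, true_and] at hf ⊢
        exact ⟨hf.1.1, hf.2⟩
    _ ≤ 2 * #{f | Monotone f ∧ clearOn (level n l) f = clearOn (level n l) f₀} :=
        card_fiber_signedSum_eq_zero_mul_le (monotone_clearOn hf₀.1)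
          (fun x hx => clearOn_eq_false_of_mem hA hx) (by rw [hfree]; exact hK.trans hf₀.2)
    _ ≤ _ := by
        gcongr
        intro f hf
        simp only [s, mem_filter, mem_univ, true_and] at hf ⊢
        refine ⟨⟨hf.1, ?_⟩, hf.2⟩
        rw [← hfree f, hf.2, hfree]
        exact hf₀.2

theorem card_minimal_le_sum_card_freePointsIn_level {f : (Fin n → Bool) → Bool}
    (hf : Monotone f) :
    #{x | Minimal (f · = true) x} ≤ ∑ l ∈ range (n + 1), #(freePointsIn f (level n l)) := by
  rw [card_eq_sum_card_fiberwise (f := weight) (t := range (n + 1))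
    fun x _ => mem_range.2 (Nat.lt_succ_of_le (weight_le x))]
  refine sum_le_sum fun l _ => card_le_card fun x hx => ?_
  simp only [mem_filter, mem_univ, true_and] at hx
  exact mem_filter.2 ⟨by simp [level, hx.2], isFreePoint_of_minimal hf hx.1⟩

theorem card_not_evasive_le (K : ℕ) :
    #{f : (Fin n → Bool) → Bool | Monotone f ∧ ¬Evasive f}
      ≤ #{f : (Fin n → Bool) → Bool |
            Monotone f ∧ #{x | Minimal (f · = true) x} < (n + 1) * K}
        + ∑ l ∈ range (n + 1), #{f : (Fin n → Bool) → Bool |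
            Monotone f ∧ signedSum f = 0 ∧ K ≤ #(freePointsIn f (level n l))} := by
  refine (card_le_card fun f hf => ?_).trans ((card_union_le _ _).trans
    (Nat.add_le_add_left card_biUnion_le _))
  simp only [mem_filter, mem_univ, true_and] at hf
  obtain ⟨hf, hev⟩ := hf
  by_cases hbig : ∃ l < n + 1, K ≤ #(freePointsIn f (level n l))
  · obtain ⟨l, hl, hK⟩ := hbig
    refine mem_union_right _ (mem_biUnion.2 ⟨l, mem_range.2 hl, ?_⟩)
    simp [hf, hK, signedSum_eq_zero_of_not_evasive hev]
  · push Not at hbig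
    refine mem_union_left _ (mem_filter.2 ⟨mem_univ _, hf, ?_⟩)
    calc _ ≤ ∑ l ∈ range (n + 1), #(freePointsIn f (level n l)) :=
          card_minimal_le_sum_card_freePointsIn_level hf
      _ < ∑ _l ∈ range (n + 1), K := sum_lt_sum_of_nonempty nonempty_range_add_one
          fun l hl => hbig l (mem_range.1 hl)
      _ = (n + 1) * K := by rw [sum_const, card_range, smul_eq_mul]

theorem card_not_evasive_mul_le (hn : 1 ≤ n) (h : 12 * n ^ 7 ≤ 2 ^ n) :
    #{f : (Fin n → Bool) → Bool | Monotone f ∧ ¬Evasive f} * n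
      ≤ 5 * #{f : (Fin n → Bool) → Bool | Monotone f} := by
  set M := #{f : (Fin n → Bool) → Bool | Monotone f}
  have hsmall : #{f : (Fin n → Bool) → Bool |
      Monotone f ∧ #{x | Minimal (f · = true) x} < (n + 1) * n ^ 4} * n ≤ M := by
    obtain ⟨l, hl⟩ := exists_two_pow_div_le_card_level n
    calc _ ≤ (n + 1) * n ^ 4 * (2 ^ n) ^ ((n + 1) * n ^ 4) * n := by
          have := card_monotone_card_minimal_lt_le (α := Fin n → Bool) ((n + 1) * n ^ 4)
          rw [Fintype.card_fun, Fintype.card_bool, Fintype.card_fin] at this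
          exact Nat.mul_le_mul_right n this
      _ ≤ 2 ^ (2 ^ n / (n + 1)) := mul_two_pow_mul_le hn h
      _ ≤ 2 ^ #(level n l) := Nat.pow_le_pow_right two_pos hl
      _ ≤ M := two_pow_card_le_card_monotone (isAntichain_level l)
  have hzero : ∀ l, #{f : (Fin n → Bool) → Bool |
      Monotone f ∧ signedSum f = 0 ∧ n ^ 4 ≤ #(freePointsIn f (level n l))} * n ^ 2
        ≤ 2 * M :=
    fun l => card_monotone_signedSum_eq_zero_mul_le l (pow_mul n 2 2).symm.le
  refine Nat.le_of_mul_le_mul_right (c := n) ?_ hn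
  rw [mul_assoc, ← sq]
  refine (Nat.mul_le_mul_right _ (card_not_evasive_le (n ^ 4))).trans ?_
  rw [add_mul, sum_mul]
  calc _ ≤ M * n + ∑ _l ∈ range (n + 1), 2 * M :=
        add_le_add (by rw [sq, ← mul_assoc]; exact Nat.mul_le_mul_right n hsmall)
          (sum_le_sum fun l _ => hzero l)
    _ = M * n + (n + 1) * (2 * M) := by rw [sum_const, card_range, smul_eq_mul]
    _ ≤ 5 * M * n := by nlinarith

end Counting

theorem tendsto_card_not_evasive_div_card_monotone :
    Tendsto (fun n : ℕ => (#{f : (Fin n → Bool) → Bool | Monotone f ∧ ¬Evasive f} : ℝ)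
      / #{f : (Fin n → Bool) → Bool | Monotone f}) atTop (nhds 0) := by
  refine squeeze_zero' (Eventually.of_forall fun n => by positivity) ?_
    (tendsto_const_div_atTop_nhds_zero_nat 5)
  filter_upwards [eventually_mul_pow_le_two_pow 12 7, eventually_ge_atTop 1] with n h hn
  rw [div_le_div_iff₀ (by exact_mod_cast card_monotone_pos) (by positivity)]
  exact_mod_cast card_not_evasive_mul_le hn h

/-- Almost all monotone Boolean functions are evasive: the proportion of
monotone functions `f : {0,1}^n → {0,1}` that are evasive tends to `1`. -/
theorem stmt19 :
    Filter.Tendsto (fun n : ℕ =>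
      ((((Finset.univ : Finset ((Fin n → Bool) → Bool)).filter
          (fun f => Monotone f ∧ Evasive f)).card : ℝ) /
        (((Finset.univ : Finset ((Fin n → Bool) → Bool)).filter
          (fun f => Monotone f)).card : ℝ)))
      Filter.atTop (nhds 1) := by
  have hsplit n := card_filter_and_div_eq_one_sub (fun f : (Fin n → Bool) → Bool => Monotone f)
    Evasive card_monotone_pos
  simpa only [hsplit, sub_zero] using tendsto_card_not_evasive_div_card_monotone.const_sub 1
end
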